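/- Let ψ : Ω → ℝ be C³ on an open set Ω ⊆ ℝ³ with ∇ψ(p) ≠ 0 and in particular ∂_zψ(p) ≠ 0 at a point p. Then the quantity ∇·(Δψ · ∇ψ/|∇ψ|²) − Δ log|∇ψ| evaluated at p equals 2/(|∇ψ|⁴ (∂_zψ)²) times the determinant of the 2×2 matrix M with entries M₁₁ = ∂_zψ(∂ₓ²ψ ∂_zψ − 2∂ₓψ ∂ₓ∂_zψ) + (∂ₓψ)² ∂_z²ψ, M₂₂ = ∂_zψ(∂ᵧ²ψ ∂_zψ − 2∂ᵧψ ∂ᵧ∂_zψ) + (∂ᵧψ)² ∂_z²ψ, and M₁₂ = M₂₁ = ∂_zψ(−∂ₓψ ∂ᵧ∂_zψ + ∂ₓ∂ᵧψ ∂_zψ − ∂ₓ∂_zψ ∂ᵧψ) + ∂ₓψ ∂ᵧψ ∂_z²ψ. -/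

import Mathlib

/-!
Write `v = ∇ψ`, `H = ∇²ψ` and `g = |v|²`, so that `∂ᵢg = 2 (Hv)ᵢ` and
`Δ log |∇ψ| = ½ ∑ᵢ ∂ᵢ(∂ᵢg / g)`. Expanding both terms by the quotient rule, the third derivatives
of `ψ` enter only through `∑ᵢ vᵢ ∂ᵢΔψ` and `∑ᵢⱼ vⱼ ∂ᵢ∂ᵢ∂ⱼψ`, which agree by symmetry of third
partials. What is left, in any dimension, is
`(g ((tr H)² - |H|²) - 2 tr H ⟨v, Hv⟩ + 2 |Hv|²) / g²`,
the scalar curvature of the level set. For a symmetric `3 × 3` matrix Cayley–Hamilton turns the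
numerator into `2 ⟨v, adj H v⟩`, and `⟨v, adj H v⟩ / g²` is the Gaussian curvature of the level
set in Goldman's form; in graph form it reads `det M / ((∂_zψ)² g²)`.
-/

open Real

/-- Partial derivative along the `i`-th coordinate direction in `Fin d → ℝ`. -/
noncomputable def pd {d : ℕ} (i : Fin d) (f : (Fin d → ℝ) → ℝ) (x : Fin d → ℝ) : ℝ :=
  fderiv ℝ f x (Pi.single i 1)

/-- The flat Laplacian on `Fin d → ℝ`. -/
noncomputable def lap {d : ℕ} (f : (Fin d → ℝ) → ℝ) (x : Fin d → ℝ) : ℝ :=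
  ∑ i, pd i (pd i f) x

open Topology Filter Matrix

variable {d : ℕ} {f g : (Fin d → ℝ) → ℝ} {p : Fin d → ℝ}

theorem Filter.EventuallyEq.pd_eq (h : f =ᶠ[𝓝 p] g) (i : Fin d) : pd i f p = pd i g p := by
  rw [pd, pd, h.fderiv_eq]

theorem ContDiffAt.contDiffAt_pd {m n : WithTop ℕ∞} (h : ContDiffAt ℝ n f p) (hmn : m + 1 ≤ n)
    (i : Fin d) : ContDiffAt ℝ m (pd i f) p :=
  (ContinuousLinearMap.apply ℝ ℝ (Pi.single i 1 : Fin d → ℝ)).contDiff.contDiffAt.comp p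
    (h.fderiv_right hmn)

theorem ContDiffAt.differentiableAt_pd {n : WithTop ℕ∞} (h : ContDiffAt ℝ n f p) (hn : 2 ≤ n)
    (i : Fin d) : DifferentiableAt ℝ (pd i f) p :=
  (h.contDiffAt_pd (m := 1) hn i).differentiableAt one_ne_zero

theorem ContDiffAt.pd_pd_comm (h : ContDiffAt ℝ 2 f p) (i j : Fin d) :
    pd i (pd j f) p = pd j (pd i f) p := by
  have hdf : DifferentiableAt ℝ (fderiv ℝ f) p :=
    (h.fderiv_right (m := 1) le_rfl).differentiableAt one_ne_zero
  have hsnd : ∀ i j : Fin d,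
      pd i (pd j f) p = fderiv ℝ (fderiv ℝ f) p (Pi.single i 1) (Pi.single j 1) := by
    intro i j
    change fderiv ℝ (fun y => fderiv ℝ f y (Pi.single j 1)) p (Pi.single i 1) = _
    rw [fderiv_clm_apply hdf (differentiableAt_const _)]
    simp
  rw [hsnd, hsnd, h.isSymmSndFDerivAt (by simp)]

theorem pd_fun_sum {ι : Type*} {s : Finset ι} {F : ι → (Fin d → ℝ) → ℝ}
    (h : ∀ j ∈ s, DifferentiableAt ℝ (F j) p) (i : Fin d) :
    pd i (fun y => ∑ j ∈ s, F j y) p = ∑ j ∈ s, pd i (F j) p := by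
  simp [pd, fderiv_fun_sum h]

theorem pd_fun_mul (hf : DifferentiableAt ℝ f p) (hg : DifferentiableAt ℝ g p) (i : Fin d) :
    pd i (fun y => f y * g y) p = pd i f p * g p + f p * pd i g p := by
  simp only [pd, fderiv_fun_mul hf hg, _root_.add_apply, _root_.smul_apply, smul_eq_mul]
  ring

theorem pd_fun_inv (hf : DifferentiableAt ℝ f p) (hf0 : f p ≠ 0) (i : Fin d) :
    pd i (fun y => (f y)⁻¹) p = -pd i f p / f p ^ 2 := by
  rw [pd, show (fun y => (f y)⁻¹) = Inv.inv ∘ f from rfl,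
    ((hasFDerivAt_inv hf0).comp p hf.hasFDerivAt).fderiv]
  simp only [pd, ContinuousLinearMap.comp_apply, ContinuousLinearMap.toSpanSingleton_apply,
    smul_eq_mul]
  ring

theorem pd_fun_div (hf : DifferentiableAt ℝ f p) (hg : DifferentiableAt ℝ g p) (hg0 : g p ≠ 0)
    (i : Fin d) : pd i (fun y => f y / g y) p = pd i f p / g p - f p * pd i g p / g p ^ 2 := by
  simp only [div_eq_mul_inv]
  rw [pd_fun_mul (g := fun y => (g y)⁻¹) hf (hg.inv hg0), pd_fun_inv hg hg0]
  ring

theorem pd_fun_log (hf : DifferentiableAt ℝ f p) (hf0 : f p ≠ 0) (i : Fin d) :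
    pd i (fun y => log (f y)) p = pd i f p / f p := by
  simp [pd, (hf.hasFDerivAt.log hf0).fderiv, div_eq_inv_mul]

theorem pd_fun_div_const (hf : DifferentiableAt ℝ f p) (c : ℝ) (i : Fin d) :
    pd i (fun y => f y / c) p = pd i f p / c := by
  simp [div_eq_mul_inv, pd, fderiv_mul_const hf, mul_comm]

noncomputable def grad (f : (Fin d → ℝ) → ℝ) (p : Fin d → ℝ) : Fin d → ℝ := fun i => pd i f p

noncomputable def hess (f : (Fin d → ℝ) → ℝ) (p : Fin d → ℝ) : Matrix (Fin d) (Fin d) ℝ :=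
  Matrix.of fun i j => pd i (pd j f) p

theorem grad_dotProduct_self : grad f p ⬝ᵥ grad f p = ∑ j, pd j f p ^ 2 := by
  simp [dotProduct, grad, sq]

theorem ContDiffAt.hess_isSymm (h : ContDiffAt ℝ 2 f p) : (hess f p).IsSymm :=
  Matrix.IsSymm.ext fun i j => h.pd_pd_comm j i

theorem ContDiffAt.pd_pd_pd_cycle (h : ContDiffAt ℝ 3 f p) (i j k : Fin d) :
    pd i (pd j (pd k f)) p = pd j (pd k (pd i f)) p := by
  have hC2 : ∀ᶠ y in 𝓝 p, ContDiffAt ℝ 2 f y := (h.of_le (by norm_num)).eventually (by simp)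
  calc pd i (pd j (pd k f)) p = pd j (pd i (pd k f)) p :=
        (h.contDiffAt_pd (m := 2) (by norm_num) k).pd_pd_comm i j
    _ = pd j (pd k (pd i f)) p :=
        Filter.EventuallyEq.pd_eq (hC2.mono fun y hy => hy.pd_pd_comm i k) j

theorem ContDiffAt.pd_sum_sq_pd (h : ContDiffAt ℝ 2 f p) (i : Fin d) :
    pd i (fun y => ∑ j, pd j f y ^ 2) p = 2 * (hess f p *ᵥ grad f p) i := by
  have hd := h.differentiableAt_pd le_rfl
  simp only [sq]
  rw [pd_fun_sum (F := fun j y => pd j f y * pd j f y) fun j _ => (hd j).mul (hd j)]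
  simp only [pd_fun_mul (hd _) (hd _), mulVec, dotProduct, hess, grad, of_apply, Finset.mul_sum]
  exact Finset.sum_congr rfl fun j _ => by ring

theorem ContDiffAt.differentiableAt_sum_sq_pd (h : ContDiffAt ℝ 2 f p) :
    DifferentiableAt ℝ (fun y => ∑ j, pd j f y ^ 2) p :=
  DifferentiableAt.fun_sum fun j _ => (h.differentiableAt_pd le_rfl j).pow 2

theorem ContDiffAt.pd_log_sqrt_sum_sq_pd (h : ContDiffAt ℝ 2 f p) (hg : ∑ j, pd j f p ^ 2 ≠ 0)
    (i : Fin d) :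
    pd i (fun y => Real.log (Real.sqrt (∑ j, pd j f y ^ 2))) p =
      (hess f p *ᵥ grad f p) i / ∑ j, pd j f p ^ 2 := by
  have hd := h.differentiableAt_sum_sq_pd
  simp only [log_sqrt (Finset.sum_nonneg fun j _ => sq_nonneg (pd j f _))]
  rw [pd_fun_div_const (hd.log hg), pd_fun_log hd hg, h.pd_sum_sq_pd]
  ring

theorem ContDiffAt.pd_pd_log_sqrt_sum_sq_pd (h : ContDiffAt ℝ 3 f p) (hg : ∑ j, pd j f p ^ 2 ≠ 0)
    (i : Fin d) :
    pd i (pd i (fun y => Real.log (Real.sqrt (∑ j, pd j f y ^ 2)))) p =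
      (∑ j, (pd i (pd i (pd j f)) p * pd j f p + hess f p i j ^ 2)) / ∑ j, pd j f p ^ 2 -
        2 * (hess f p *ᵥ grad f p) i ^ 2 / (∑ j, pd j f p ^ 2) ^ 2 := by
  have h2 : ContDiffAt ℝ 2 f p := h.of_le (by norm_num)
  have hd := h2.differentiableAt_sum_sq_pd
  have hlog : pd i (fun y => Real.log (Real.sqrt (∑ j, pd j f y ^ 2))) =ᶠ[𝓝 p]
      fun y => (hess f y *ᵥ grad f y) i / ∑ j, pd j f y ^ 2 := by
    filter_upwards [h2.eventually (by simp), hd.continuousAt.eventually_ne hg] with y hy hgy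
    exact hy.pd_log_sqrt_sum_sq_pd hgy i
  have hdf := h.differentiableAt_pd (by norm_num)
  have hdff : ∀ j, DifferentiableAt ℝ (pd i (pd j f)) p := fun j =>
    (h.contDiffAt_pd (m := 2) (by norm_num) j).differentiableAt_pd le_rfl i
  have hdw : DifferentiableAt ℝ (fun y => (hess f y *ᵥ grad f y) i) p :=
    DifferentiableAt.fun_sum (u := Finset.univ) fun j _ => (hdff j).fun_mul (hdf j)
  have hw : pd i (fun y => (hess f y *ᵥ grad f y) i) p =
      ∑ j, (pd i (pd i (pd j f)) p * pd j f p + hess f p i j ^ 2) := by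
    change pd i (fun y => ∑ j, pd i (pd j f) y * pd j f y) p = _
    rw [pd_fun_sum (F := fun j y => pd i (pd j f) y * pd j f y) fun j _ => (hdff j).mul (hdf j)]
    simp only [pd_fun_mul (hdff _) (hdf _), hess, of_apply, sq]
  rw [hlog.pd_eq, pd_fun_div hdw hd hg, hw, h2.pd_sum_sq_pd]
  ring

theorem ContDiffAt.differentiableAt_lap (h : ContDiffAt ℝ 3 f p) :
    DifferentiableAt ℝ (lap f) p :=
  DifferentiableAt.fun_sum (u := Finset.univ) fun i _ =>
    (h.contDiffAt_pd (m := 2) (by norm_num) i).differentiableAt_pd le_rfl i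

theorem ContDiffAt.pd_lap_mul_pd_div_sum_sq_pd (h : ContDiffAt ℝ 3 f p)
    (hg : ∑ j, pd j f p ^ 2 ≠ 0) (i : Fin d) :
    pd i (fun y => lap f y * pd i f y / ∑ j, pd j f y ^ 2) p =
      (pd i (lap f) p * pd i f p + lap f p * pd i (pd i f) p) / ∑ j, pd j f p ^ 2 -
        2 * lap f p * (pd i f p * (hess f p *ᵥ grad f p) i) / (∑ j, pd j f p ^ 2) ^ 2 := by
  have h2 : ContDiffAt ℝ 2 f p := h.of_le (by norm_num)
  have hdf := h2.differentiableAt_pd le_rfl i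
  rw [pd_fun_div (h.differentiableAt_lap.fun_mul hdf) h2.differentiableAt_sum_sq_pd hg,
    pd_fun_mul h.differentiableAt_lap hdf, h2.pd_sum_sq_pd]
  ring

theorem ContDiffAt.sum_pd_lap_mul_pd (h : ContDiffAt ℝ 3 f p) :
    ∑ i, pd i (lap f) p * pd i f p = ∑ i, ∑ j, pd i (pd i (pd j f)) p * pd j f p := by
  have hlap : ∀ i, pd i (lap f) p = ∑ j, pd j (pd j (pd i f)) p := fun i => by
    change pd i (fun y => ∑ j, pd j (pd j f) y) p = _
    rw [pd_fun_sum fun j _ =>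
      (h.contDiffAt_pd (m := 2) (by norm_num) j).differentiableAt_pd le_rfl j]
    exact Finset.sum_congr rfl fun j _ => h.pd_pd_pd_cycle i j j
  simp only [hlap, Finset.sum_mul]
  exact Finset.sum_comm

theorem ContDiffAt.sum_pd_lap_mul_pd_div_sub_lap_log_sqrt (h : ContDiffAt ℝ 3 f p)
    (hg : ∑ j, pd j f p ^ 2 ≠ 0) :
    (∑ i, pd i (fun y => lap f y * pd i f y / ∑ j, pd j f y ^ 2) p) -
        lap (fun y => Real.log (Real.sqrt (∑ j, pd j f y ^ 2))) p =
      (grad f p ⬝ᵥ grad f p * ((hess f p).trace ^ 2 - ∑ i, ∑ j, hess f p i j ^ 2) -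
          2 * (hess f p).trace * (grad f p ⬝ᵥ hess f p *ᵥ grad f p) +
          2 * (hess f p *ᵥ grad f p ⬝ᵥ hess f p *ᵥ grad f p)) / (grad f p ⬝ᵥ grad f p) ^ 2 := by
  change _ - ∑ i, pd i (pd i _) p = _
  simp only [h.pd_lap_mul_pd_div_sum_sq_pd hg, h.pd_pd_log_sqrt_sum_sq_pd hg,
    Finset.sum_sub_distrib, Finset.sum_add_distrib, ← Finset.sum_div, ← Finset.mul_sum,
    h.sum_pd_lap_mul_pd, grad_dotProduct_self]
  have htr : (hess f p).trace = lap f p := rfl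
  have hlap : ∑ i, pd i (pd i f) p = lap f p := rfl
  have hvHv : grad f p ⬝ᵥ hess f p *ᵥ grad f p = ∑ i, pd i f p * (hess f p *ᵥ grad f p) i := rfl
  have hHvHv : hess f p *ᵥ grad f p ⬝ᵥ hess f p *ᵥ grad f p =
      ∑ i, (hess f p *ᵥ grad f p) i ^ 2 := by
    simp only [dotProduct, sq]
  rw [htr, hlap, hvHv, hHvHv]
  field_simp
  ring

section Algebra

variable {R : Type*} [CommRing R] {H : Matrix (Fin 3) (Fin 3) R}

theorem Matrix.IsSymm.two_mul_dotProduct_adjugate_mulVec (hH : H.IsSymm) (v : Fin 3 → R) :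
    2 * (v ⬝ᵥ H.adjugate *ᵥ v) =
      v ⬝ᵥ v * (H.trace ^ 2 - ∑ i, ∑ j, H i j ^ 2) - 2 * H.trace * (v ⬝ᵥ H *ᵥ v) +
        2 * (H *ᵥ v ⬝ᵥ H *ᵥ v) := by
  simp only [adjugate_fin_three, trace, diag_apply, dotProduct, mulVec, Fin.sum_univ_three,
    of_apply, cons_val', cons_val_fin_one, cons_val_zero, cons_val_one, cons_val,
    ← hH.apply 0 1, ← hH.apply 0 2, ← hH.apply 1 2]
  ring

/-- The matrix `M`: `-(∂_zψ)³` times the Hessian of the graph `z = h(x, y)` of the level set,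
written through `v = ∇ψ` and `H = ∇²ψ` (implicit differentiation of `∂ₓh = -∂ₓψ / ∂_zψ`). -/
def implicitGraphHessian (v : Fin 3 → R) (H : Matrix (Fin 3) (Fin 3) R) :
    Matrix (Fin 2) (Fin 2) R :=
  !![v 2 * (H 0 0 * v 2 - 2 * v 0 * H 0 2) + v 0 ^ 2 * H 2 2,
      v 2 * (-v 0 * H 1 2 + H 0 1 * v 2 - H 0 2 * v 1) + v 0 * v 1 * H 2 2;
    v 2 * (-v 0 * H 1 2 + H 0 1 * v 2 - H 0 2 * v 1) + v 0 * v 1 * H 2 2,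
      v 2 * (H 1 1 * v 2 - 2 * v 1 * H 1 2) + v 1 ^ 2 * H 2 2]

theorem Matrix.IsSymm.det_implicitGraphHessian (hH : H.IsSymm) (v : Fin 3 → R) :
    (implicitGraphHessian v H).det = v 2 ^ 2 * (v ⬝ᵥ H.adjugate *ᵥ v) := by
  simp only [implicitGraphHessian, det_fin_two_of, adjugate_fin_three, dotProduct, mulVec,
    Fin.sum_univ_three, of_apply, cons_val', cons_val_fin_one, cons_val_zero, cons_val_one,
    cons_val, ← hH.apply 0 1, ← hH.apply 0 2, ← hH.apply 1 2]
  ring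

end Algebra

theorem implicit_surface_gauss_curvature
    (Ω : Set (Fin 3 → ℝ)) (hΩ : IsOpen Ω)
    (ψ : (Fin 3 → ℝ) → ℝ) (hψ : ContDiffOn ℝ 3 ψ Ω)
    (p : Fin 3 → ℝ) (hp : p ∈ Ω) (hz : pd 2 ψ p ≠ 0) :
    (∑ i, pd i (fun y => lap ψ y * pd i ψ y / (∑ j, (pd j ψ y) ^ 2)) p) -
        lap (fun y => Real.log (Real.sqrt (∑ j, (pd j ψ y) ^ 2))) p =
      2 / ((∑ j, (pd j ψ p) ^ 2) ^ 2 * (pd 2 ψ p) ^ 2) *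
        ((pd 2 ψ p * (pd 0 (pd 0 ψ) p * pd 2 ψ p -
              2 * pd 0 ψ p * pd 0 (pd 2 ψ) p) +
            (pd 0 ψ p) ^ 2 * pd 2 (pd 2 ψ) p) *
          (pd 2 ψ p * (pd 1 (pd 1 ψ) p * pd 2 ψ p -
              2 * pd 1 ψ p * pd 1 (pd 2 ψ) p) +
            (pd 1 ψ p) ^ 2 * pd 2 (pd 2 ψ) p) -
          (pd 2 ψ p * (-(pd 0 ψ p) * pd 1 (pd 2 ψ) p +
              pd 0 (pd 1 ψ) p * pd 2 ψ p - pd 0 (pd 2 ψ) p * pd 1 ψ p) +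
            pd 0 ψ p * pd 1 ψ p * pd 2 (pd 2 ψ) p) ^ 2) := by
  have hψp : ContDiffAt ℝ 3 ψ p := hψ.contDiffAt (hΩ.mem_nhds hp)
  have hH : (hess ψ p).IsSymm := (hψp.of_le (by norm_num)).hess_isSymm
  have hg : ∑ j, pd j ψ p ^ 2 ≠ 0 :=
    (Finset.sum_pos' (fun j _ => sq_nonneg _) ⟨2, Finset.mem_univ _, by positivity⟩).ne'
  rw [hψp.sum_pd_lap_mul_pd_div_sub_lap_log_sqrt hg, ← hH.two_mul_dotProduct_adjugate_mulVec,
    grad_dotProduct_self]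
  trans 2 / ((∑ j, pd j ψ p ^ 2) ^ 2 * pd 2 ψ p ^ 2) *
    (implicitGraphHessian (grad ψ p) (hess ψ p)).det
  · rw [hH.det_implicitGraphHessian, grad]
    field_simp
  · simp only [implicitGraphHessian, det_fin_two_of, grad, hess, of_apply]
    ring
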